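/- arXiv:1203.5760 — 3 statements merged into one kernel-verified Lean document; each statement's English description precedes it below -/
import Mathlib

section
/- Let d ≥ 1 and L > 0. For every x ∈ B_L and every Lebesgue measurable set E ⊆ B_L, ν_L({σ : σ(x) ∈ E}) = (2Lω_d)^{−1}·∫_E |x − y|^{−(d−1)} dy. -/
open MeasureTheory Metric Set Filter
open scoped RealInnerProductSpace Classical

noncomputable section

/-- Euclidean space ℝ^d. -/
abbrev Euc (d : ℕ) := EuclideanSpace ℝ (Fin d)

/-- ω_d = d·m(B₁), the surface area of the unit sphere in ℝ^d. -/
def omegaD (d : ℕ) : ℝ := d * (volume (ball (0 : Euc d) 1)).toReal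

/-- κ_m = volume of the unit ball in ℝ^m (κ₀ = 1). -/
def kappa (m : ℕ) : ℝ := (volume (ball (0 : EuclideanSpace ℝ (Fin m)) 1)).toReal

/-- The reflection of ℝ^d across an affine hyperplane not containing the origin,
parametrized by the image `v ≠ 0` of the origin: `reflPt v` is the unique such
reflection with `reflPt v 0 = v`. -/
def reflPt {d : ℕ} (v : Euc d) (y : Euc d) : Euc d :=
  y + (1 - 2 * ⟪y, v⟫ / ⟪v, v⟫) • v

/-- The polarization f^σ of a function with respect to the reflection `reflPt v`:
the half-space `{y | ⟪y,v⟫ ≤ ‖v‖²/2}` is the closed half-space containing the origin. -/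
def polarize {d : ℕ} (v : Euc d) (f : Euc d → ℝ) (y : Euc d) : ℝ :=
  if ⟪y, v⟫ ≤ ‖v‖ ^ 2 / 2 then max (f y) (f (reflPt v y))
  else min (f y) (f (reflPt v y))

/-- The polarization A^σ of a set, characterized by χ_{A^σ} = (χ_A)^σ. -/
def polarizeSet {d : ℕ} (v : Euc d) (A : Set (Euc d)) : Set (Euc d) :=
  {y | if ⟪y, v⟫ ≤ ‖v‖ ^ 2 / 2 then y ∈ A ∨ reflPt v y ∈ A
       else y ∈ A ∧ reflPt v y ∈ A}

/-- Radius r_f(t) of the ball {f>t}*. -/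
def schwarzRad {d : ℕ} (f : Euc d → ℝ) (t : ℝ) : ℝ :=
  ((volume {x | t < f x}).toReal / (volume (ball (0 : Euc d) 1)).toReal) ^ (1 / (d : ℝ))

/-- The symmetric decreasing rearrangement f*(x) = ∫₀^∞ χ_{{f>t}*}(x) dt. -/
def symmDecr {d : ℕ} (f : Euc d → ℝ) (x : Euc d) : ℝ :=
  ∫ t in Ioi (0 : ℝ), if ‖x‖ < schwarzRad f t then (1 : ℝ) else 0

/-- The measure ν_L on reflections (parametrized by v = σ(0) ∈ B_{2L}∖{0}),
with density (2Lω_d)⁻¹·|v|^{-(d-1)} with respect to Lebesgue measure. -/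
def reflMeasure (d : ℕ) (L : ℝ) : Measure (Euc d) :=
  (volume.restrict (ball (0 : Euc d) (2 * L) \ {0})).withDensity
    (fun v => ENNReal.ofReal ((2 * L * omegaD d)⁻¹ * (‖v‖ ^ (d - 1))⁻¹))

/-- The law ν_L^⊗n of the first n random polarizations (σ₁, …, σₙ). -/
def polMeasure (d : ℕ) (L : ℝ) (n : ℕ) : Measure (Fin n → Euc d) :=
  Measure.pi fun _ => reflMeasure d L

/-- The iterated polarization f^{σ₁⋯σₙ} = (⋯(f^{σ₁})⋯)^{σₙ}. -/
def iterPolarize {d : ℕ} : {n : ℕ} → (Fin n → Euc d) → (Euc d → ℝ) → Euc d → ℝ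
  | 0, _, f => f
  | n + 1, σs, f => polarize (σs (Fin.last n)) (iterPolarize (fun i : Fin n => σs i.castSucc) f)

/-- One step of the center dynamics of polarized balls: the center stays put if it lies
in the closed half-space (bounded by the fixed hyperplane of the reflection `reflPt v`)
containing the origin, and is reflected otherwise. -/
def polarizeCenter {d : ℕ} (v : Euc d) (c : Euc d) : Euc d :=
  if ⟪c, v⟫ ≤ ‖v‖ ^ 2 / 2 then c else reflPt v c

/-- The center Cₙ of the n-fold polarization (x₀+B_r)^{σ₁⋯σₙ} = Cₙ+B_r of a ball. -/
def chain {d : ℕ} : {n : ℕ} → (Fin n → Euc d) → Euc d → Euc d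
  | 0, _, c => c
  | n + 1, σs, c => polarizeCenter (σs (Fin.last n)) (chain (fun i : Fin n => σs i.castSucc) c)

/-- The expected distance-to-origin zₙ = 𝔼(Xₙ) = 𝔼|Cₙ| of the center of n random
polarizations of the ball x₀ + B_r. -/
def zchain (d : ℕ) (L : ℝ) (x₀ : Euc d) (n : ℕ) : ℝ :=
  ∫ σs, ‖chain σs x₀‖ ∂(polMeasure d L n)

/-- The constant c_k (computed with respect to a unit vector u). -/
def cconst (d : ℕ) (L : ℝ) (u : Euc d) (k : ℕ) : ℝ :=
  (2 * L * omegaD d)⁻¹ * ∫ y in ball (0 : Euc d) 1, (1 - ‖y‖ ^ k) * (‖u - y‖ ^ (d - 1))⁻¹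

/-!
Fix `x`. Writing `reflPt v x = x + g v • v`, the map `Φ : v ↦ reflPt v x` is a bijection from
`{v ≠ 0 | Φ v ≠ x}` onto `{y | y ≠ x, ‖y‖ ≠ ‖x‖}`, and both sets have full measure. Its
differential `g v • id + (Dg v) ⊗ v` is a rank-one perturbation of a homothety, with determinant
`(g v) ^ (d - 1)`, while `‖x - Φ v‖ = |g v| ‖v‖`. Hence the change of variables `y = Φ v` turns
`‖v‖ ^ (1 - d) dv` into `‖x - y‖ ^ (1 - d) dy`. The cutoff `‖v‖ < 2L` in `ν_L` is automatic: the
midpoint of `x` and `Φ v` lies on the mirror, which is at distance `‖v‖ / 2` from the origin.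
-/

section Determinant

variable {K V : Type*} [Field K] [AddCommGroup V] [Module K V] [FiniteDimensional K V]

theorem LinearMap.det_id_add_smulRight (φ : V →ₗ[K] K) (u : V) :
    LinearMap.det (LinearMap.id + φ.smulRight u) = 1 + φ u := by
  let b := Module.finBasis K V
  have hmat : LinearMap.toMatrix b b (LinearMap.id + φ.smulRight u) =
      1 + Matrix.replicateCol Unit (b.repr u) * Matrix.replicateRow Unit (φ ∘ b) := by
    ext i j
    simp [LinearMap.toMatrix_apply, Matrix.one_apply, Finsupp.single_apply, Matrix.mul_apply,
      mul_comm, eq_comm]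
  rw [← LinearMap.det_toMatrix b, hmat, Matrix.det_one_add_replicateCol_mul_replicateRow]
  conv_rhs => rw [← b.sum_repr u]
  simp only [dotProduct, map_sum, map_smul, smul_eq_mul, Function.comp_apply, mul_comm]

theorem LinearMap.det_smul_id_add_smulRight (hV : 1 ≤ Module.finrank K V) {a : K} (ha : a ≠ 0)
    (φ : V →ₗ[K] K) (u : V) :
    LinearMap.det (a • LinearMap.id + φ.smulRight u) =
      a ^ (Module.finrank K V - 1) * (a + φ u) := by
  have : a • LinearMap.id + φ.smulRight u = a • (LinearMap.id + (a⁻¹ • φ).smulRight u) := by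
    ext w; simp [smul_smul, ha]
  rw [this, LinearMap.det_smul, LinearMap.det_id_add_smulRight]
  obtain ⟨n, hn⟩ : ∃ n, Module.finrank K V = n + 1 := ⟨_, (Nat.sub_add_cancel hV).symm⟩
  rw [hn, pow_succ]
  simp only [smul_apply, smul_eq_mul, add_tsub_cancel_right]
  field_simp

end Determinant

section Reflection

variable {d : ℕ} {x v y : Euc d}

def reflCoeff (x v : Euc d) : ℝ := 1 - 2 * ⟪x, v⟫ / ‖v‖ ^ 2

theorem reflPt_sub_self (v x : Euc d) : reflPt v x - x = reflCoeff x v • v := by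
  rw [reflPt, reflCoeff, real_inner_self_eq_norm_sq, add_sub_cancel_left]

theorem reflPt_eq_add_smul (v x : Euc d) : reflPt v x = x + reflCoeff x v • v := by
  rw [← reflPt_sub_self, add_sub_cancel]

theorem norm_sub_reflPt (v x : Euc d) : ‖x - reflPt v x‖ = |reflCoeff x v| * ‖v‖ := by
  rw [norm_sub_rev, reflPt_sub_self, norm_smul, Real.norm_eq_abs]

theorem reflCoeff_ne_zero (h : reflPt v x ≠ x) : reflCoeff x v ≠ 0 := by
  rintro hg
  rw [reflPt_eq_add_smul, hg, zero_smul, add_zero] at h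
  exact h rfl

theorem norm_reflPt_sq_sub_norm_sq (hv : v ≠ 0) :
    ‖reflPt v x‖ ^ 2 - ‖x‖ ^ 2 = reflCoeff x v * ‖v‖ ^ 2 := by
  have : ‖v‖ ≠ 0 := norm_ne_zero_iff.mpr hv
  rw [reflPt_eq_add_smul, norm_add_sq_real, real_inner_smul_right, norm_smul, mul_pow,
    Real.norm_eq_abs, sq_abs, reflCoeff]
  field_simp
  ring

theorem norm_reflPt_ne (hv : v ≠ 0) (h : reflPt v x ≠ x) : ‖reflPt v x‖ ≠ ‖x‖ := by
  intro hn
  have := norm_reflPt_sq_sub_norm_sq (x := x) hv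
  rw [hn, sub_self, eq_comm] at this
  exact mul_ne_zero (reflCoeff_ne_zero h) (pow_ne_zero _ (norm_ne_zero_iff.mpr hv)) this

theorem inner_add_reflPt (v x : Euc d) : ⟪x + reflPt v x, v⟫ = ‖v‖ ^ 2 := by
  rcases eq_or_ne v 0 with rfl | hv
  · simp
  have : ‖v‖ ≠ 0 := norm_ne_zero_iff.mpr hv
  rw [reflPt_eq_add_smul, ← add_assoc, inner_add_left, inner_smul_left, real_inner_self_eq_norm_sq,
    inner_add_left, reflCoeff]
  simp only [conj_trivial]
  field_simp
  ring

theorem norm_le_norm_add_norm_reflPt (v x : Euc d) : ‖v‖ ≤ ‖x‖ + ‖reflPt v x‖ := by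
  rcases eq_or_ne v 0 with rfl | hv
  · simp only [norm_zero]; positivity
  have hv' : 0 < ‖v‖ := norm_pos_iff.mpr hv
  refine le_of_mul_le_mul_right ?_ hv'
  calc ‖v‖ * ‖v‖ = ⟪x + reflPt v x, v⟫ := by rw [inner_add_reflPt, sq]
    _ ≤ ‖x + reflPt v x‖ * ‖v‖ := real_inner_le_norm _ _
    _ ≤ (‖x‖ + ‖reflPt v x‖) * ‖v‖ := by gcongr; exact norm_add_le _ _

theorem mem_sphere_of_reflPt_eq_self (h : reflPt v x = x) : v ∈ sphere x ‖x‖ := by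
  have hinner := inner_add_reflPt v x
  rw [h, inner_add_left] at hinner
  rw [mem_sphere_iff_norm, ← sq_eq_sq₀ (norm_nonneg _) (norm_nonneg _), norm_sub_sq_real,
    real_inner_comm]
  linarith

-- The reflection of `0` across the perpendicular bisector of `[x, y]`.
def reflPtInv (x y : Euc d) : Euc d := ((‖y‖ ^ 2 - ‖x‖ ^ 2) / ‖y - x‖ ^ 2) • (y - x)

theorem reflPtInv_reflPt (hv : v ≠ 0) (h : reflPt v x ≠ x) : reflPtInv x (reflPt v x) = v := by
  have hg := reflCoeff_ne_zero h
  have : ‖v‖ ≠ 0 := norm_ne_zero_iff.mpr hv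
  rw [reflPtInv, norm_reflPt_sq_sub_norm_sq hv, reflPt_sub_self, norm_smul, mul_pow,
    Real.norm_eq_abs, sq_abs, smul_smul]
  field_simp
  simp

theorem reflPt_reflPtInv (hxy : y ≠ x) (hn : ‖y‖ ≠ ‖x‖) : reflPt (reflPtInv x y) x = y := by
  have hw : ‖y - x‖ ≠ 0 := norm_ne_zero_iff.mpr (sub_ne_zero.mpr hxy)
  have hS : ‖y‖ ^ 2 - ‖x‖ ^ 2 ≠ 0 := by
    rwa [sub_ne_zero, ne_eq, sq_eq_sq₀ (norm_nonneg _) (norm_nonneg _)]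
  have hid : ‖y‖ ^ 2 - ‖x‖ ^ 2 = ‖y - x‖ ^ 2 + 2 * ⟪x, y - x⟫ := by
    have := norm_add_sq_real x (y - x)
    rw [add_sub_cancel] at this
    linarith
  rw [reflPt_eq_add_smul, reflPtInv, smul_smul, reflCoeff, real_inner_smul_right, norm_smul,
    mul_pow, Real.norm_eq_abs, sq_abs]
  convert add_sub_cancel x y using 2
  convert one_smul ℝ (y - x) using 2
  field_simp
  linear_combination hid

theorem reflPtInv_ne_zero (hxy : y ≠ x) (hn : ‖y‖ ≠ ‖x‖) : reflPtInv x y ≠ 0 := by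
  intro h
  have := reflPt_reflPtInv hxy hn
  rw [h, reflPt_eq_add_smul, smul_zero, add_zero] at this
  exact hxy this.symm

def reflCoeffFDeriv (x v : Euc d) : Euc d →L[ℝ] ℝ :=
  innerSL ℝ ((4 * ⟪x, v⟫ / ‖v‖ ^ 4) • v - (2 / ‖v‖ ^ 2) • x)

theorem reflCoeffFDeriv_apply (x v w : Euc d) :
    reflCoeffFDeriv x v w = 4 * ⟪x, v⟫ / ‖v‖ ^ 4 * ⟪v, w⟫ - 2 / ‖v‖ ^ 2 * ⟪x, w⟫ := by
  rw [reflCoeffFDeriv, innerSL_apply_apply, inner_sub_left, real_inner_smul_left,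
    real_inner_smul_left]

theorem hasFDerivAt_reflCoeff (x : Euc d) (hv : v ≠ 0) :
    HasFDerivAt (reflCoeff x) (reflCoeffFDeriv x v) v := by
  have hv2 : ‖v‖ ^ 2 ≠ 0 := pow_ne_zero _ (norm_ne_zero_iff.mpr hv)
  have hnum : HasFDerivAt (fun w : Euc d => 2 * ⟪x, w⟫) ((2 : ℝ) • innerSL ℝ x) v :=
    (innerSL ℝ x).hasFDerivAt.const_mul 2
  have hden : HasFDerivAt (fun w : Euc d => ‖w‖ ^ 2) ((2 : ℝ) • innerSL ℝ v) v := by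
    simpa [two_smul] using (hasStrictFDerivAt_norm_sq v).hasFDerivAt
  have hinv := (hasDerivAt_inv hv2).comp_hasFDerivAt v hden
  have h : HasFDerivAt (reflCoeff x) _ v := (hnum.mul hinv).const_sub 1
  refine h.congr_fderiv ?_
  ext w
  have : ‖v‖ ≠ 0 := norm_ne_zero_iff.mpr hv
  simp only [neg_smul, smul_neg, Function.comp_apply, neg_add_rev, neg_neg, add_apply, neg_apply,
    smul_apply, coe_innerSL_apply, smul_eq_mul, reflCoeffFDeriv_apply]
  field_simp
  ring

theorem reflCoeffFDeriv_apply_self (x : Euc d) (hv : v ≠ 0) :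
    reflCoeffFDeriv x v v = 1 - reflCoeff x v := by
  have : ‖v‖ ≠ 0 := norm_ne_zero_iff.mpr hv
  rw [reflCoeffFDeriv_apply, real_inner_self_eq_norm_sq, reflCoeff, sub_sub_cancel]
  field_simp
  ring

def reflPtFDeriv (x v : Euc d) : Euc d →L[ℝ] Euc d :=
  reflCoeff x v • ContinuousLinearMap.id ℝ (Euc d) + (reflCoeffFDeriv x v).smulRight v

theorem hasFDerivAt_reflPt (x : Euc d) (hv : v ≠ 0) :
    HasFDerivAt (fun w => reflPt w x) (reflPtFDeriv x v) v := by
  simp_rw [reflPt_eq_add_smul]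
  exact ((hasFDerivAt_reflCoeff x hv).smul (hasFDerivAt_id v)).const_add x

theorem det_reflPtFDeriv (hd : 1 ≤ d) (hv : v ≠ 0) (hg : reflCoeff x v ≠ 0) :
    (reflPtFDeriv x v).det = reflCoeff x v ^ (d - 1) := by
  have hdet := LinearMap.det_smul_id_add_smulRight (V := Euc d) (by simpa using hd) hg
    (reflCoeffFDeriv x v : Euc d →ₗ[ℝ] ℝ) v
  rw [finrank_euclideanSpace_fin, ContinuousLinearMap.coe_coe, reflCoeffFDeriv_apply_self x hv,
    add_sub_cancel, mul_one] at hdet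
  exact hdet

theorem abs_det_mul_inv_norm_sub_reflPt_pow (hd : 1 ≤ d) (hv : v ≠ 0) (h : reflPt v x ≠ x) :
    |(reflPtFDeriv x v).det| * (‖x - reflPt v x‖ ^ (d - 1))⁻¹ = (‖v‖ ^ (d - 1))⁻¹ := by
  have hg : |reflCoeff x v| ^ (d - 1) ≠ 0 := pow_ne_zero _ (abs_ne_zero.mpr (reflCoeff_ne_zero h))
  rw [det_reflPtFDeriv hd hv (reflCoeff_ne_zero h), norm_sub_reflPt, abs_pow, mul_pow, mul_inv,
    ← mul_assoc, mul_inv_cancel₀ hg, one_mul]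

theorem measurable_reflPt_left (x : Euc d) : Measurable fun v : Euc d => reflPt v x := by
  unfold reflPt
  fun_prop

theorem image_reflPt_preimage_diff (x : Euc d) (E : Set (Euc d)) :
    (fun v => reflPt v x) '' (({v | reflPt v x ∈ E} \ {0}) \ {v | reflPt v x = x}) =
      E \ ({x} ∪ sphere 0 ‖x‖) := by
  ext y
  constructor
  · rintro ⟨v, ⟨⟨hvE, hv0⟩, hvx⟩, rfl⟩
    refine ⟨hvE, ?_⟩
    rintro (hy | hy)
    · exact hvx hy
    · exact norm_reflPt_ne hv0 hvx (mem_sphere_zero_iff_norm.mp hy)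
  · rintro ⟨hyE, hy⟩
    have hyx : y ≠ x := fun h => hy (Or.inl h)
    have hyn : ‖y‖ ≠ ‖x‖ := fun h => hy (Or.inr (mem_sphere_zero_iff_norm.mpr h))
    refine ⟨reflPtInv x y, ⟨⟨?_, reflPtInv_ne_zero hyx hyn⟩, ?_⟩, reflPt_reflPtInv hyx hyn⟩ <;>
      simp only [mem_ofPred_eq, reflPt_reflPtInv hyx hyn]
    exacts [hyE, hyx]

theorem lintegral_preimage_reflPt (hd : 1 ≤ d) (x : Euc d) {E : Set (Euc d)}
    (hE : MeasurableSet E) :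
    ∫⁻ v in {v | reflPt v x ∈ E} \ {0}, ENNReal.ofReal (‖v‖ ^ (d - 1))⁻¹ =
      ∫⁻ y in E, ENNReal.ofReal (‖x - y‖ ^ (d - 1))⁻¹ := by
  have : Nontrivial (Euc d) :=
    Module.nontrivial_of_finrank_pos (R := ℝ) (by rw [finrank_euclideanSpace_fin]; omega)
  set Φ := fun v : Euc d => reflPt v x
  set S := ({v | reflPt v x ∈ E} \ {0}) \ {v | reflPt v x = x}
  have hS : MeasurableSet S :=
    ((measurable_reflPt_left x hE).diff (measurableSet_singleton 0)).diff
      (measurable_reflPt_left x (measurableSet_singleton x))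
  have hSae : S =ᵐ[volume] ({v | reflPt v x ∈ E} \ {0} : Set (Euc d)) := by
    refine sdiff_ae_eq_self.mpr (measure_mono_null ?_ (Measure.addHaar_sphere volume x ‖x‖))
    exact fun v hv => mem_sphere_of_reflPt_eq_self hv.2
  have hEae : (E \ ({x} ∪ sphere 0 ‖x‖) : Set (Euc d)) =ᵐ[volume] E :=
    sdiff_ae_eq_self.mpr (measure_mono_null inter_subset_right
      (measure_union_null (measure_singleton x) (Measure.addHaar_sphere volume 0 ‖x‖)))
  have hinj : InjOn Φ S := LeftInvOn.injOn (f₁' := reflPtInv x) fun v hv =>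
    reflPtInv_reflPt hv.1.2 hv.2
  calc ∫⁻ v in {v | reflPt v x ∈ E} \ {0}, ENNReal.ofReal (‖v‖ ^ (d - 1))⁻¹
      = ∫⁻ v in S, ENNReal.ofReal (‖v‖ ^ (d - 1))⁻¹ := setLIntegral_congr hSae.symm
    _ = ∫⁻ v in S, ENNReal.ofReal |(reflPtFDeriv x v).det| *
          ENNReal.ofReal (‖x - Φ v‖ ^ (d - 1))⁻¹ := by
        refine setLIntegral_congr_fun hS fun v hv => ?_
        rw [← ENNReal.ofReal_mul (abs_nonneg _),
          abs_det_mul_inv_norm_sub_reflPt_pow hd hv.1.2 hv.2]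
    _ = ∫⁻ y in Φ '' S, ENNReal.ofReal (‖x - y‖ ^ (d - 1))⁻¹ :=
        (lintegral_image_eq_lintegral_abs_det_fderiv_mul volume hS
          (fun v hv => (hasFDerivAt_reflPt x hv.1.2).hasFDerivWithinAt) hinj
          fun y => ENNReal.ofReal (‖x - y‖ ^ (d - 1))⁻¹).symm
    _ = ∫⁻ y in E, ENNReal.ofReal (‖x - y‖ ^ (d - 1))⁻¹ := by
        rw [image_reflPt_preimage_diff]; exact setLIntegral_congr hEae

end Reflection

theorem integrableOn_ball_inv_norm_pow {F : Type*} [NormedAddCommGroup F] [NormedSpace ℝ F]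
    [FiniteDimensional ℝ F] [MeasurableSpace F] [BorelSpace F] {μ : Measure F}
    [μ.IsAddHaarMeasure] (hF : 1 ≤ Module.finrank ℝ F) (R : ℝ) :
    IntegrableOn (fun v : F => (‖v‖ ^ (Module.finrank ℝ F - 1))⁻¹) (ball 0 R) μ := by
  refine integrableOn_ball_of_norm_le_rpow (C := 1) (α := (Module.finrank ℝ F - 1 : ℕ)) hF
    (by norm_cast; omega) (ae_of_all _ fun v => ?_) (by fun_prop)
  rw [one_mul, Real.rpow_neg (norm_nonneg v), Real.rpow_natCast, norm_inv, norm_pow, norm_norm]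

theorem stmt_3_general {d : ℕ} (hd : 1 ≤ d) {L : ℝ} (x : Euc d)
    (hx : x ∈ ball (0 : Euc d) L) (E : Set (Euc d)) (hE : MeasurableSet E)
    (hEL : E ⊆ ball (0 : Euc d) L) :
    reflMeasure d L {v | reflPt v x ∈ E} =
      ENNReal.ofReal ((2 * L * omegaD d)⁻¹ * ∫ y in E, (‖x - y‖ ^ (d - 1))⁻¹) := by
  have hc : 0 ≤ (2 * L * omegaD d)⁻¹ := by
    have := pos_of_mem_ball hx
    unfold omegaD
    positivity
  have hΦE : MeasurableSet {v | reflPt v x ∈ E} := measurable_reflPt_left x hE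
  have hball : {v | reflPt v x ∈ E} ⊆ ball 0 (2 * L) := fun v hv => by
    have hy := hEL hv
    rw [mem_ball_zero_iff] at hx hy ⊢
    linarith [norm_le_norm_add_norm_reflPt v x]
  have hfin : ∫⁻ y in E, ENNReal.ofReal (‖x - y‖ ^ (d - 1))⁻¹ ≠ ⊤ := by
    rw [← lintegral_preimage_reflPt hd x hE]
    refine ((lintegral_mono_set (sdiff_subset.trans hball)).trans_lt ?_).ne
    have := integrableOn_ball_inv_norm_pow (F := Euc d) (μ := volume)
      (by rwa [finrank_euclideanSpace_fin]) (2 * L)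
    rw [finrank_euclideanSpace_fin] at this
    exact this.setLIntegral_lt_top
  rw [reflMeasure, withDensity_apply _ hΦE, Measure.restrict_restrict hΦE, ← inter_sdiff_assoc,
    inter_eq_left.mpr hball]
  simp_rw [ENNReal.ofReal_mul hc]
  rw [lintegral_const_mul _ (by fun_prop), lintegral_preimage_reflPt hd x hE,
    integral_eq_lintegral_of_nonneg_ae (ae_of_all _ fun y => by positivity) (by fun_prop),
    ENNReal.ofReal_toReal hfin]

/-- For every x ∈ B_L and measurable E ⊆ B_L,
ν_L({σ : σ(x) ∈ E}) = (2Lω_d)⁻¹·∫_E |x − y|^{−(d−1)} dy. -/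
theorem stmt_3 {d : ℕ} (hd : 1 ≤ d) {L : ℝ} (hL : 0 < L) (x : Euc d)
    (hx : x ∈ ball (0 : Euc d) L) (E : Set (Euc d)) (hE : MeasurableSet E)
    (hEL : E ⊆ ball (0 : Euc d) L) :
    reflMeasure d L {v | reflPt v x ∈ E} =
      ENNReal.ofReal ((2 * L * omegaD d)⁻¹ * ∫ y in E, (‖x - y‖ ^ (d - 1))⁻¹) :=
  stmt_3_general hd x hx E hE hEL

end
end

section
/- Let d ≥ 1, let σ be a reflection of ℝ^d across an affine hyperplane H not containing the origin, let c ∈ ℝ^d and r > 0. If c lies in the closed half-space bounded by H that contains the origin, then (c + B_r)^σ = c + B_r; otherwise (c + B_r)^σ = σ(c) + B_r. In both cases the polarized set is an open ball of radius r whose center is the point of {c, σ(c)} lying in the closed half-space containing the origin, and the distance of this center from the origin equals min(|c|, |σ(c)|). -/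
open MeasureTheory Metric Set Filter
open scoped RealInnerProductSpace Classical

noncomputable section

/-!
The reflection `σ = reflPt v` is an involutive isometry exchanging the two sides of its
hyperplane `⟪y, v⟫ = ‖v‖²/2`, and
`dist y (σ c)² - dist y c² = (2⟪c, v⟫ - ‖v‖²)(2⟪y, v⟫ - ‖v‖²)/‖v‖²`,
so a point is at least as close to whichever of `c`, `σ c` lies on its own side.
For `c` on the side of the origin this makes `(c + B_r)^σ = c + B_r`; for `c` on the other
side, `σ` swaps the balls `c + B_r` and `σ c + B_r`, which therefore have the same polarization.
-/

section Reflection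

variable {d : ℕ} {v : Euc d}

lemma inner_reflPt (hv : v ≠ 0) (y : Euc d) : ⟪reflPt v y, v⟫ = ‖v‖ ^ 2 - ⟪y, v⟫ := by
  have hvv : ⟪v, v⟫ ≠ 0 := inner_self_ne_zero.mpr hv
  rw [← real_inner_self_eq_norm_sq]
  simp only [reflPt, inner_add_left, real_inner_smul_left]
  field_simp
  ring

lemma reflPt_reflPt (hv : v ≠ 0) (y : Euc d) : reflPt v (reflPt v y) = y := by
  have hvv : ⟪v, v⟫ ≠ 0 := inner_self_ne_zero.mpr hv
  have hcoef : (1 - 2 * ⟪y, v⟫ / ⟪v, v⟫) + (1 - 2 * (⟪v, v⟫ - ⟪y, v⟫) / ⟪v, v⟫) = 0 := by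
    field_simp
    ring
  rw [reflPt, inner_reflPt hv, ← real_inner_self_eq_norm_sq, reflPt, add_assoc, ← add_smul,
    hcoef, zero_smul, add_zero]

lemma dist_reflPt_sq (hv : v ≠ 0) (y c : Euc d) :
    dist y (reflPt v c) ^ 2 =
      dist y c ^ 2 + (2 * ⟪c, v⟫ - ‖v‖ ^ 2) * (2 * ⟪y, v⟫ - ‖v‖ ^ 2) / ‖v‖ ^ 2 := by
  have hvv : ⟪v, v⟫ ≠ 0 := inner_self_ne_zero.mpr hv
  simp only [dist_eq_norm, ← real_inner_self_eq_norm_sq, reflPt, inner_sub_left,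
    inner_sub_right, inner_add_left, inner_add_right, real_inner_smul_left,
    real_inner_smul_right, real_inner_comm v c, real_inner_comm v y, real_inner_comm c y]
  field_simp
  ring

lemma dist_reflPt_comm (hv : v ≠ 0) (y c : Euc d) :
    dist (reflPt v y) c = dist y (reflPt v c) := by
  rw [← sq_eq_sq₀ dist_nonneg dist_nonneg, dist_comm, dist_reflPt_sq hv, dist_reflPt_sq hv,
    dist_comm]
  ring

lemma dist_reflPt_reflPt (hv : v ≠ 0) (y c : Euc d) :
    dist (reflPt v y) (reflPt v c) = dist y c := by
  rw [dist_reflPt_comm hv, reflPt_reflPt hv]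

lemma dist_le_dist_reflPt_of_le (hv : v ≠ 0) {y c : Euc d} (hy : ⟪y, v⟫ ≤ ‖v‖ ^ 2 / 2)
    (hc : ⟪c, v⟫ ≤ ‖v‖ ^ 2 / 2) : dist y c ≤ dist y (reflPt v c) := by
  rw [← sq_le_sq₀ dist_nonneg dist_nonneg, dist_reflPt_sq hv, le_add_iff_nonneg_right]
  exact div_nonneg (mul_nonneg_of_nonpos_of_nonpos (by linarith) (by linarith)) (sq_nonneg _)

lemma dist_reflPt_le_dist_of_le_of_lt (hv : v ≠ 0) {y c : Euc d}
    (hc : ⟪c, v⟫ ≤ ‖v‖ ^ 2 / 2) (hy : ‖v‖ ^ 2 / 2 < ⟪y, v⟫) :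
    dist y (reflPt v c) ≤ dist y c := by
  rw [← sq_le_sq₀ dist_nonneg dist_nonneg, dist_reflPt_sq hv, add_le_iff_nonpos_right]
  exact div_nonpos_of_nonpos_of_nonneg
    (mul_nonpos_of_nonpos_of_nonneg (by linarith) (by linarith)) (sq_nonneg _)

end Reflection

section Polarization

variable {d : ℕ} {v : Euc d}

lemma polarizeSet_ball_of_inner_le (hv : v ≠ 0) {c : Euc d} (r : ℝ)
    (hc : ⟪c, v⟫ ≤ ‖v‖ ^ 2 / 2) : polarizeSet v (ball c r) = ball c r := by
  ext y
  simp only [polarizeSet, mem_ofPred_eq, mem_ball, dist_reflPt_comm hv]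
  split_ifs with hy
  · exact ⟨fun h => h.elim id (lt_of_le_of_lt (dist_le_dist_reflPt_of_le hv hy hc)), Or.inl⟩
  · exact ⟨And.left, fun h =>
      ⟨h, lt_of_le_of_lt (dist_reflPt_le_dist_of_le_of_lt hv hc (not_le.mp hy)) h⟩⟩

lemma polarizeSet_ball_reflPt (hv : v ≠ 0) (c : Euc d) (r : ℝ) :
    polarizeSet v (ball (reflPt v c) r) = polarizeSet v (ball c r) := by
  ext y
  simp only [polarizeSet, mem_ofPred_eq, mem_ball, dist_reflPt_reflPt hv, dist_reflPt_comm hv]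
  split_ifs
  exacts [or_comm, and_comm]

lemma inner_polarizeCenter_le (hv : v ≠ 0) (c : Euc d) :
    ⟪polarizeCenter v c, v⟫ ≤ ‖v‖ ^ 2 / 2 := by
  unfold polarizeCenter
  split_ifs with hc
  · exact hc
  · rw [inner_reflPt hv]
    linarith [not_le.mp hc]

lemma polarizeSet_ball (hv : v ≠ 0) (c : Euc d) (r : ℝ) :
    polarizeSet v (ball c r) = ball (polarizeCenter v c) r := by
  rw [← polarizeSet_ball_of_inner_le hv r (inner_polarizeCenter_le hv c), polarizeCenter]
  split_ifs
  exacts [rfl, (polarizeSet_ball_reflPt hv c r).symm]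

lemma norm_polarizeCenter (hv : v ≠ 0) (c : Euc d) :
    ‖polarizeCenter v c‖ = min ‖c‖ ‖reflPt v c‖ := by
  have h0 : ⟪(0 : Euc d), v⟫ ≤ ‖v‖ ^ 2 / 2 := by
    rw [inner_zero_left]
    positivity
  -- the origin, like the kept center, lies on the near side of the hyperplane
  have hnear := dist_le_dist_reflPt_of_le hv h0 (inner_polarizeCenter_le hv c)
  simp only [dist_zero_left] at hnear
  unfold polarizeCenter at hnear ⊢
  split_ifs at hnear ⊢
  · exact (min_eq_left hnear).symm
  · rw [reflPt_reflPt hv] at hnear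
    exact (min_eq_right hnear).symm

end Polarization

theorem stmt_8_general {d : ℕ} (v : Euc d) (hv : v ≠ 0) (c : Euc d) (r : ℝ) :
    ((⟪c, v⟫ ≤ ‖v‖ ^ 2 / 2 → polarizeSet v (ball c r) = ball c r) ∧
      (¬ ⟪c, v⟫ ≤ ‖v‖ ^ 2 / 2 → polarizeSet v (ball c r) = ball (reflPt v c) r)) ∧
    polarizeSet v (ball c r) = ball (polarizeCenter v c) r ∧
    ⟪polarizeCenter v c, v⟫ ≤ ‖v‖ ^ 2 / 2 ∧
    ‖polarizeCenter v c‖ = min ‖c‖ ‖reflPt v c‖ := by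
  have hball := polarizeSet_ball hv c r
  refine ⟨⟨fun hc => ?_, fun hc => ?_⟩, hball, inner_polarizeCenter_le hv c,
    norm_polarizeCenter hv c⟩
  · rwa [polarizeCenter, if_pos hc] at hball
  · rwa [polarizeCenter, if_neg hc] at hball

/-- Polarization of a ball: if the center c lies in the closed half-space containing the
origin then (c + B_r)^σ = c + B_r, otherwise (c + B_r)^σ = σ(c) + B_r; in both cases the
polarized set is the ball of radius r around `polarizeCenter v c`, which lies in the closed
half-space containing the origin and has distance min(|c|, |σ(c)|) from the origin. -/
theorem stmt_8 {d : ℕ} (hd : 1 ≤ d) (v : Euc d) (hv : v ≠ 0) (c : Euc d) (r : ℝ) (hr : 0 < r) :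
    ((⟪c, v⟫ ≤ ‖v‖ ^ 2 / 2 → polarizeSet v (ball c r) = ball c r) ∧
      (¬ ⟪c, v⟫ ≤ ‖v‖ ^ 2 / 2 → polarizeSet v (ball c r) = ball (reflPt v c) r)) ∧
    polarizeSet v (ball c r) = ball (polarizeCenter v c) r ∧
    ⟪polarizeCenter v c, v⟫ ≤ ‖v‖ ^ 2 / 2 ∧
    ‖polarizeCenter v c‖ = min ‖c‖ ‖reflPt v c‖ :=
  stmt_8_general v hv c r

end
end

section
/- Let d ≥ 1, r > 0 and x ∈ ℝ^d with |x| ≤ 2r. Then the Lebesgue measure of the symmetric difference of two balls of radius r whose centers are at distance |x| is m(B_r △ (x + B_r)) = 2·(m(B_r) − 2·κ_{d−1}·r^d·∫₀^{arccos(|x|/(2r))} sin^d(t) dt), where κ_{d−1} is the volume of the unit ball in ℝ^{d−1} (κ₀ = 1). Moreover, the map s ↦ m(B_r △ (s·u + B_r)) (u a unit vector) has right derivative 2·κ_{d−1}·r^{d−1} at s = 0. -/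
/-!
Rotating `x` onto the first axis of `ℝ × ℝ^(d-1)`, the slice of the lens `B_r ∩ (x + B_r)`
at height `t` is a `(d-1)`-ball of radius `√(r² - t²)` for `t ≥ |x|/2`, and its mirror image
under `t ↦ |x| - t` below `|x|/2`. Hence
`m(B_r ∩ (x + B_r)) = 2 κ_{d-1} ∫_{|x|/2}^r (r² - t²)^{(d-1)/2} dt`, the substitution `t = r cos θ` turns this into the sine integral, and
`m(A △ B) = m A + m B - 2 m(A ∩ B)` gives the formula. The right derivative at `0` is the
fundamental theorem of calculus applied to the lower limit `s/2`.
-/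

open MeasureTheory Metric Set Filter
open scoped RealInnerProductSpace Classical

noncomputable section

open scoped symmDiff

theorem measureReal_symmDiff_eq_add_sub_inter {α : Type*} [MeasurableSpace α] {μ : Measure α}
    {s t : Set α} (hs : MeasurableSet s) (ht : MeasurableSet t)
    (h₁ : μ s ≠ ⊤ := by finiteness) (h₂ : μ t ≠ ⊤ := by finiteness) :
    μ.real (s ∆ t) = μ.real s + μ.real t - 2 * μ.real (s ∩ t) := by
  have hs' := measureReal_sdiff_add_inter ht h₁
  have ht' := measureReal_sdiff_add_inter hs h₂
  rw [inter_comm] at ht'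
  rw [measureReal_symmDiff_eq hs ht h₁ h₂]
  linarith

theorem measureReal_ball_symmDiff_ball {E : Type*} [NormedAddCommGroup E] [NormedSpace ℝ E]
    [MeasurableSpace E] [BorelSpace E] [FiniteDimensional ℝ E] (μ : Measure E)
    [μ.IsAddHaarMeasure] (x : E) (r : ℝ) :
    μ.real (ball 0 r ∆ ball x r) = 2 * (μ.real (ball 0 r) - μ.real (ball 0 r ∩ ball x r)) := by
  rw [measureReal_symmDiff_eq_add_sub_inter measurableSet_ball measurableSet_ball,
    measureReal_def μ (ball x r), Measure.addHaar_ball_center, ← measureReal_def]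
  ring

section Isometry
variable {E F : Type*} [NormedAddCommGroup E] [InnerProductSpace ℝ E] [FiniteDimensional ℝ E]
  [NormedAddCommGroup F] [InnerProductSpace ℝ F] [FiniteDimensional ℝ F]

theorem exists_linearIsometryEquiv_of_finrank_eq (h : Module.finrank ℝ E = Module.finrank ℝ F) :
    Nonempty (E ≃ₗᵢ[ℝ] F) :=
  ⟨((stdOrthonormalBasis ℝ E).reindex (finCongr h)).repr.trans (stdOrthonormalBasis ℝ F).repr.symm⟩

variable [MeasurableSpace E] [BorelSpace E] [MeasurableSpace F] [BorelSpace F]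

theorem LinearIsometryEquiv.volume_ball_inter_ball (e : E ≃ₗᵢ[ℝ] F) (x : E) (r : ℝ) :
    volume (ball 0 r ∩ ball (e x) r) = volume (ball (0 : E) r ∩ ball x r) := by
  rw [← e.measurePreserving.measure_preimage
      (measurableSet_ball.inter measurableSet_ball).nullMeasurableSet,
    preimage_inter, e.preimage_ball, e.preimage_ball, e.symm_apply_apply, map_zero]

theorem volume_ball_inter_ball_congr (e : E ≃ₗᵢ[ℝ] F) {x : E} {y : F} (h : ‖x‖ = ‖y‖) (r : ℝ) :
    volume (ball (0 : E) r ∩ ball x r) = volume (ball (0 : F) r ∩ ball y r) := by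
  have hy : Submodule.reflection (ℝ ∙ (e x - y))ᗮ (e x) = y :=
    Submodule.reflection_sub (by rw [e.norm_map, h])
  rw [← hy, ← (e.trans (Submodule.reflection (ℝ ∙ (e x - y))ᗮ)).volume_ball_inter_ball x r]
  rfl

end Isometry

section OneDim
open intervalIntegral

theorem integral_comp_min_sq_sub_sq {G : ℝ → ℝ} (hG : Continuous G) {r s : ℝ} (hs : 0 ≤ s)
    (hsr : s ≤ 2 * r) :
    ∫ t in (s - r)..r, G (min (r ^ 2 - t ^ 2) (r ^ 2 - (t - s) ^ 2)) =
      2 * ∫ t in (s / 2)..r, G (r ^ 2 - t ^ 2) := by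
  have hc : Continuous fun t => G (min (r ^ 2 - t ^ 2) (r ^ 2 - (t - s) ^ 2)) := by fun_prop
  rw [← integral_add_adjacent_intervals (b := s / 2) (hc.intervalIntegrable _ _)
    (hc.intervalIntegrable _ _)]
  have hleft : ∫ t in (s - r)..(s / 2), G (min (r ^ 2 - t ^ 2) (r ^ 2 - (t - s) ^ 2)) =
      ∫ t in (s - r)..(s / 2), G (r ^ 2 - (s - t) ^ 2) := by
    refine integral_congr fun t ht => ?_
    rw [uIcc_of_le (by linarith)] at ht
    rw [min_eq_right (by nlinarith [ht.2])]
    ring_nf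
  have hright : ∫ t in (s / 2)..r, G (min (r ^ 2 - t ^ 2) (r ^ 2 - (t - s) ^ 2)) =
      ∫ t in (s / 2)..r, G (r ^ 2 - t ^ 2) := by
    refine integral_congr fun t ht => ?_
    rw [uIcc_of_le (by linarith)] at ht
    rw [min_eq_left (by nlinarith [ht.1])]
  rw [hleft, hright, integral_comp_sub_left (fun t => G (r ^ 2 - t ^ 2)), sub_sub_cancel,
    sub_half]
  ring

theorem integral_sqrt_sq_sub_sq_pow {r c : ℝ} (hr : 0 < r) (hc₁ : -r ≤ c) (hc₂ : c ≤ r) (n : ℕ) :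
    ∫ t in c..r, √(r ^ 2 - t ^ 2) ^ n =
      r ^ (n + 1) * ∫ θ in (0 : ℝ)..Real.arccos (c / r), Real.sin θ ^ (n + 1) := by
  set a := Real.arccos (c / r)
  have hcos : r * Real.cos a = c := by
    rw [Real.cos_arccos (by rw [le_div_iff₀ hr]; linarith) (by rw [div_le_one hr]; exact hc₂)]
    field_simp
  have key := integral_comp_mul_deriv (a := 0) (b := a) (f := fun θ => r * Real.cos θ)
    (f' := fun θ => -(r * Real.sin θ)) (g := fun t => √(r ^ 2 - t ^ 2) ^ n)
    (fun θ _ => by simpa using (Real.hasDerivAt_cos θ).const_mul r) (by fun_prop) (by fun_prop)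
  simp only [Function.comp_def, Real.cos_zero, mul_one, hcos] at key
  have hsub : ∫ θ in (0 : ℝ)..a, √(r ^ 2 - (r * Real.cos θ) ^ 2) ^ n * -(r * Real.sin θ) =
      ∫ θ in (0 : ℝ)..a, -(r ^ (n + 1) * Real.sin θ ^ (n + 1)) := by
    refine integral_congr fun θ hθ => ?_
    rw [uIcc_of_le (Real.arccos_nonneg _)] at hθ
    have hsin : 0 ≤ r * Real.sin θ := mul_nonneg hr.le
      (Real.sin_nonneg_of_nonneg_of_le_pi hθ.1 (hθ.2.trans (Real.arccos_le_pi _)))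
    have hsq : r ^ 2 - (r * Real.cos θ) ^ 2 = (r * Real.sin θ) ^ 2 := by
      linear_combination -r ^ 2 * Real.sin_sq_add_cos_sq θ
    simp only [hsq, Real.sqrt_sq hsin]
    ring
  rw [integral_symm, ← key, hsub, intervalIntegral.integral_neg,
    intervalIntegral.integral_const_mul, neg_neg]

theorem Continuous.hasDerivAt_integral_half_left {f : ℝ → ℝ} (hf : Continuous f) (a b : ℝ) :
    HasDerivAt (fun s => ∫ t in (s / 2)..b, f t) (-f (a / 2) * (1 / 2)) a := by
  have hleft : HasDerivAt (fun u => ∫ t in u..b, f t) (-f (a / 2)) (a / 2) :=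
    (hf.integral_hasStrictDerivAt b (a / 2)).hasDerivAt.neg.congr_of_eventuallyEq
      (.of_forall fun u => integral_symm b u)
  exact hleft.comp a ((hasDerivAt_id a).div_const 2)

end OneDim

section Lens

theorem ball_inter_ball_toLp_eq_setOf {V : Type*} [NormedAddCommGroup V] {r : ℝ} (hr : 0 < r)
    (s : ℝ) :
    ball (0 : WithLp 2 (ℝ × V)) r ∩ ball (WithLp.toLp 2 (s, 0)) r =
      {p | ‖p.snd‖ ^ 2 < min (r ^ 2 - p.fst ^ 2) (r ^ 2 - (p.fst - s) ^ 2)} := by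
  ext p
  simp only [mem_inter_iff, mem_ball_iff_norm, sub_zero, mem_ofPred_eq, lt_min_iff,
    ← sq_lt_sq₀ (norm_nonneg _) hr.le, WithLp.prod_norm_sq_eq_of_L2, WithLp.sub_fst,
    WithLp.sub_snd, WithLp.toLp_fst, WithLp.toLp_snd, Real.norm_eq_abs, sq_abs]
  constructor <;> rintro ⟨h₁, h₂⟩ <;> constructor <;> linarith

variable {V : Type*} [NormedAddCommGroup V] [InnerProductSpace ℝ V] [FiniteDimensional ℝ V]
  [MeasurableSpace V] [BorelSpace V]

theorem volume_setOf_norm_snd_sq_lt {g : ℝ → ℝ} (hg : Measurable g) :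
    volume {p : WithLp 2 (ℝ × V) | ‖p.snd‖ ^ 2 < g p.fst} = ∫⁻ t, volume (ball (0 : V) √(g t)) := by
  have hS : MeasurableSet {q : ℝ × V | ‖q.2‖ ^ 2 < g q.1} :=
    measurableSet_lt (by fun_prop) (hg.comp measurable_fst)
  rw [show {p : WithLp 2 (ℝ × V) | ‖p.snd‖ ^ 2 < g p.fst} =
      WithLp.ofLp ⁻¹' {q : ℝ × V | ‖q.2‖ ^ 2 < g q.1} from rfl,
    (WithLp.volume_preserving_ofLp ℝ V).measure_preimage hS.nullMeasurableSet,
    Measure.volume_eq_prod, Measure.prod_apply hS]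
  congr 1 with t
  congr 1 with y
  simp [Real.lt_sqrt (norm_nonneg _)]


theorem volume_ball_inter_ball_toLp {r s : ℝ} (hr : 0 < r) (hs : 0 ≤ s) (hsr : s ≤ 2 * r) :
    volume (ball (0 : WithLp 2 (ℝ × V)) r ∩ ball (WithLp.toLp 2 (s, 0)) r) =
      ENNReal.ofReal (2 * ∫ t in (s / 2)..r, √(r ^ 2 - t ^ 2) ^ Module.finrank ℝ V) *
        volume (ball (0 : V) 1) := by
  set g : ℝ → ℝ := fun t => min (r ^ 2 - t ^ 2) (r ^ 2 - (t - s) ^ 2)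
  have hg : Continuous g := by fun_prop
  have hslice : (fun t => volume (ball (0 : V) √(g t))) = (Ioo (s - r) r).indicator
      fun t => ENNReal.ofReal (√(g t) ^ Module.finrank ℝ V) * volume (ball (0 : V) 1) := by
    ext t
    by_cases ht : t ∈ Ioo (s - r) r
    · have hpos : 0 < g t := lt_min (by nlinarith [ht.1, ht.2]) (by nlinarith [ht.1, ht.2])
      rw [indicator_of_mem ht, Measure.addHaar_ball_of_pos _ _ (Real.sqrt_pos.2 hpos)]
    · have hneg : g t ≤ 0 := by
        rcases not_and_or.1 ht with h | h <;> rw [not_lt] at h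
        · exact min_le_of_right_le (by nlinarith)
        · exact min_le_of_left_le (by nlinarith)
      rw [indicator_of_notMem ht, Real.sqrt_eq_zero'.2 hneg, ball_zero, measure_empty]
  have hint : IntegrableOn (fun t => √(g t) ^ Module.finrank ℝ V) (Ioo (s - r) r) :=
    (Continuous.integrableOn_Icc (by fun_prop)).mono_set Ioo_subset_Icc_self
  rw [ball_inter_ball_toLp_eq_setOf hr, volume_setOf_norm_snd_sq_lt hg.measurable, hslice,
    lintegral_indicator measurableSet_Ioo, lintegral_mul_const _ (by fun_prop),
    ← ofReal_integral_eq_lintegral_ofReal hint (.of_forall fun _ => by positivity),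
    ← integral_Ioc_eq_integral_Ioo, ← intervalIntegral.integral_of_le (by linarith),
    integral_comp_min_sq_sub_sq (G := fun c => √c ^ Module.finrank ℝ V) (by fun_prop) hs hsr]

end Lens

section Euclidean
variable {E : Type*} [NormedAddCommGroup E] [InnerProductSpace ℝ E] [FiniteDimensional ℝ E]
  [MeasurableSpace E] [BorelSpace E] {n : ℕ}

theorem measureReal_ball_inter_ball (hE : Module.finrank ℝ E = n + 1) {r : ℝ} (hr : 0 < r)
    {x : E} (hx : ‖x‖ ≤ 2 * r) :
    volume.real (ball (0 : E) r ∩ ball x r) =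
      2 * kappa n * ∫ t in (‖x‖ / 2)..r, √(r ^ 2 - t ^ 2) ^ n := by
  obtain ⟨e⟩ := exists_linearIsometryEquiv_of_finrank_eq (F := WithLp 2 (ℝ × Euc n)) <| by
    rw [hE, (WithLp.linearEquiv 2 ℝ (ℝ × Euc n)).finrank_eq, Module.finrank_prod,
      Module.finrank_self, finrank_euclideanSpace_fin, add_comm]
  have hnorm : ‖x‖ = ‖WithLp.toLp 2 (‖x‖, (0 : Euc n))‖ := by simp
  have hint : 0 ≤ ∫ t in (‖x‖ / 2)..r, √(r ^ 2 - t ^ 2) ^ n :=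
    intervalIntegral.integral_nonneg (by linarith) fun t _ => by positivity
  rw [measureReal_def, volume_ball_inter_ball_congr e hnorm,
    volume_ball_inter_ball_toLp hr (norm_nonneg x) hx, finrank_euclideanSpace_fin,
    ENNReal.toReal_mul, ENNReal.toReal_ofReal (by positivity), kappa]
  ring

theorem measureReal_ball_symmDiff_ball_eq (hE : Module.finrank ℝ E = n + 1) {r : ℝ} (hr : 0 < r)
    {x : E} (hx : ‖x‖ ≤ 2 * r) :
    volume.real (ball (0 : E) r ∆ ball x r) =
      2 * (volume.real (ball (0 : E) r) -
        2 * kappa n * ∫ t in (‖x‖ / 2)..r, √(r ^ 2 - t ^ 2) ^ n) := by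
  rw [measureReal_ball_symmDiff_ball, measureReal_ball_inter_ball hE hr hx]

theorem hasDerivWithinAt_measureReal_ball_symmDiff_ball (hE : Module.finrank ℝ E = n + 1)
    {r : ℝ} (hr : 0 < r) {u : E} (hu : ‖u‖ = 1) :
    HasDerivWithinAt (fun s : ℝ => volume.real (ball (0 : E) r ∆ ball (s • u) r))
      (2 * kappa n * r ^ n) (Ici 0) 0 := by
  set F : ℝ → ℝ := fun s => 2 * (volume.real (ball (0 : E) r) -
    2 * kappa n * ∫ t in (s / 2)..r, √(r ^ 2 - t ^ 2) ^ n)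
  have hF : HasDerivAt F (2 * kappa n * r ^ n) 0 := by
    refine ((((Continuous.hasDerivAt_integral_half_left (f := fun t => √(r ^ 2 - t ^ 2) ^ n)
      (by fun_prop) 0 r).const_mul (2 * kappa n)).const_sub _).const_mul 2).congr_deriv ?_
    simp only [zero_div, zero_pow two_ne_zero, sub_zero, Real.sqrt_sq hr.le]
    ring
  have hagree : ∀ s ∈ Icc (0 : ℝ) (2 * r),
      volume.real (ball (0 : E) r ∆ ball (s • u) r) = F s := by
    intro s hs
    have hsu : ‖s • u‖ = s := by rw [norm_smul, hu, mul_one, Real.norm_of_nonneg hs.1]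
    rw [measureReal_ball_symmDiff_ball_eq hE hr (hsu.trans_le hs.2), hsu]
  refine hF.hasDerivWithinAt.congr_of_eventuallyEq ?_ (hagree 0 ⟨le_rfl, by positivity⟩)
  filter_upwards [Icc_mem_nhdsGE (by positivity : (0 : ℝ) < 2 * r)] using hagree

end Euclidean

/-- Symmetric difference of two balls of radius r with centers at distance |x| ≤ 2r:
m(B_r △ (x + B_r)) = 2·(m(B_r) − 2·κ_{d−1}·r^d·∫₀^{arccos(|x|/(2r))} sin^d t dt); moreover
s ↦ m(B_r △ (s·u + B_r)) has right derivative 2·κ_{d−1}·r^{d−1} at s = 0. -/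
theorem stmt_12 {d : ℕ} (hd : 1 ≤ d) (r : ℝ) (hr : 0 < r) (x : Euc d) (hx : ‖x‖ ≤ 2 * r)
    (u : Euc d) (hu : ‖u‖ = 1) :
    (volume (symmDiff (ball (0 : Euc d) r) (ball x r))).toReal =
        2 * ((volume (ball (0 : Euc d) r)).toReal -
          2 * kappa (d - 1) * r ^ d *
            ∫ t in (0 : ℝ)..Real.arccos (‖x‖ / (2 * r)), Real.sin t ^ d) ∧
      HasDerivWithinAt
        (fun s : ℝ => (volume (symmDiff (ball (0 : Euc d) r) (ball (s • u) r))).toReal)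
        (2 * kappa (d - 1) * r ^ (d - 1)) (Ici (0 : ℝ)) 0 := by
  obtain ⟨n, rfl⟩ : ∃ n, d = n + 1 := ⟨d - 1, by omega⟩
  have hE : Module.finrank ℝ (Euc (n + 1)) = n + 1 := finrank_euclideanSpace_fin
  rw [Nat.add_sub_cancel]
  refine ⟨?_, hasDerivWithinAt_measureReal_ball_symmDiff_ball hE hr hu⟩
  simp only [← measureReal_def]
  rw [measureReal_ball_symmDiff_ball_eq hE hr hx,
    integral_sqrt_sq_sub_sq_pow hr (by linarith [norm_nonneg x]) (by linarith), div_div]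
  ring

end
end
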